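/- The set S of all mild solutions of ẋ(t) = L x_t with instantaneous-input initial data (0,ξ), ξ ranging over 𝕂ⁿ, is a 𝕂-linear subspace of the space of functions from [-r,∞) to 𝕂ⁿ, and its dimension equals n. -/

import Mathlib

open MeasureTheory

/-- `x` is a mild solution of `ẋ(t) = L x_t` with `M¹` initial datum `(φ, ξ)`:
history `φ` on `[-r,0)`, value `ξ` at `0`, continuous on `[0,∞)`, and
`x(t) = ξ + L(∫_0^t x_s ds)` for all `t ≥ 0`, where `∫_0^t x_s ds` is the continuous
function `[-r,0] → 𝕂ⁿ`, `θ ↦ ∫_θ^{t+θ} x(s) ds`. -/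
def IsMildSol {𝕜 : Type*} [RCLike 𝕜] {n : ℕ} (r : ℝ)
    (L : C(Set.Icc (-r) (0:ℝ), Fin n → 𝕜) →L[𝕜] (Fin n → 𝕜))
    (φ : ℝ → Fin n → 𝕜) (ξ : Fin n → 𝕜) (x : ℝ → Fin n → 𝕜) : Prop :=
  (∀ θ ∈ Set.Ico (-r) (0:ℝ), x θ = φ θ) ∧ x 0 = ξ ∧
  ContinuousOn x (Set.Ici (0:ℝ)) ∧
  ∀ t, 0 ≤ t → ∃ ψ : C(Set.Icc (-r) (0:ℝ), Fin n → 𝕜),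
    (∀ θ : Set.Icc (-r) (0:ℝ), ψ θ = ∫ s in (θ : ℝ)..(t + (θ : ℝ)), x s) ∧
    x t = ξ + L ψ

open Set intervalIntegral BoundedContinuousFunction

section aux
variable {E : Type*} [NormedAddCommGroup E] [NormedSpace ℝ E]

lemma ae_ne_zero' : ∀ᵐ s : ℝ, s ≠ (0:ℝ) := by
  rw [MeasureTheory.ae_iff]
  simpa using Real.volume_singleton (x := (0:ℝ))

lemma intervalIntegrable_of_zero' {x : ℝ → E} {θ : ℝ} (hθ : θ ≤ 0)
    (hx0 : ∀ s, θ ≤ s → s < 0 → x s = 0) :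
    IntervalIntegrable x volume θ 0 := by
  have h : ∀ᵐ s ∂(volume.restrict (Set.Ioc θ 0)), x s = 0 := by
    rw [MeasureTheory.ae_restrict_iff' measurableSet_Ioc]
    filter_upwards [ae_ne_zero'] with s hs hmem
    exact hx0 s hmem.1.le (lt_of_le_of_ne hmem.2 hs)
  rw [intervalIntegrable_iff_integrableOn_Ioc_of_le hθ]
  exact (MeasureTheory.integrable_zero _ _ _).congr
    (by filter_upwards [h] with s hs; simp [hs])

lemma integral_zero_of_zero' {x : ℝ → E} {θ : ℝ} (hθ : θ ≤ 0)
    (hx0 : ∀ s, θ ≤ s → s < 0 → x s = 0) :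
    ∫ s in θ..(0:ℝ), x s = 0 := by
  rw [← intervalIntegral.integral_zero (a := θ) (b := (0:ℝ)) (E := E)]
  apply intervalIntegral.integral_congr_ae
  filter_upwards [ae_ne_zero'] with s hs hmem
  rw [Set.uIoc_of_le hθ] at hmem
  exact hx0 s hmem.1.le (lt_of_le_of_ne hmem.2 hs)

lemma integral_split' {x : ℝ → E} {θ t : ℝ} (hθ : θ ≤ 0) (ht : 0 ≤ t)
    (hx0 : ∀ s, θ ≤ s → s < 0 → x s = 0)
    (hxc : ContinuousOn x (Set.Ici 0)) :
    ∫ s in θ..(t + θ), x s = ∫ s in (0:ℝ)..(max (t + θ) 0), x s := by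
  rcases le_or_gt (t + θ) 0 with h | h
  · rw [max_eq_right h, intervalIntegral.integral_same]
    rw [← intervalIntegral.integral_zero (a := θ) (b := t + θ) (E := E)]
    apply intervalIntegral.integral_congr_ae
    filter_upwards [ae_ne_zero'] with s hs hmem
    rw [Set.uIoc_of_le (by linarith)] at hmem
    exact hx0 s hmem.1.le (lt_of_le_of_ne (hmem.2.trans h) hs)
  · rw [max_eq_left h.le]
    have h1 : IntervalIntegrable x volume θ 0 := intervalIntegrable_of_zero' hθ hx0
    have h2 : IntervalIntegrable x volume 0 (t + θ) := by
      apply ContinuousOn.intervalIntegrable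
      apply hxc.mono
      rw [Set.uIcc_of_le h.le]
      exact fun s hs => hs.1
    rw [← intervalIntegral.integral_add_adjacent_intervals h1 h2,
      integral_zero_of_zero' hθ hx0, zero_add]

lemma integral_exp_mul' {K : ℝ} (hK : 0 < K) (m : ℝ) :
    ∫ s in (0:ℝ)..m, Real.exp (K * s) = (Real.exp (K * m) - 1) / K := by
  have : ∀ s ∈ Set.uIcc (0:ℝ) m,
      HasDerivAt (fun u => Real.exp (K * u) / K) (Real.exp (K * s)) s := by
    intro s _
    have h1 : HasDerivAt (fun u : ℝ => K * u) K s := by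
      simpa using (hasDerivAt_id s).const_mul K
    have h2 := (Real.hasDerivAt_exp (K * s)).comp s h1
    have := h2.div_const K
    simpa [mul_comm, mul_div_assoc, mul_div_cancel_left₀ _ hK.ne'] using this
  rw [intervalIntegral.integral_eq_sub_of_hasDerivAt this
    (by apply Continuous.intervalIntegrable; continuity)]
  rw [mul_zero, Real.exp_zero, div_sub_div_same]

lemma exp_bound_aux' {a C D K : ℝ} (ha : 0 ≤ a) (hK : 0 < K) (hC : 0 ≤ C) (hD : 0 ≤ D) :
    Real.exp (-a) * (C + D * ((Real.exp a - 1) / K)) ≤ C + D / K := by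
  rw [Real.exp_neg]
  set A := Real.exp a with hA
  have hA1 : 1 ≤ A := Real.one_le_exp ha
  have hA0 : 0 < A := lt_of_lt_of_le one_pos hA1
  have key : A⁻¹ * (A - 1) ≤ 1 := by
    rw [mul_sub, inv_mul_cancel₀ hA0.ne']
    have : 0 ≤ A⁻¹ := by positivity
    linarith
  have hinv : A⁻¹ ≤ 1 := by
    rw [inv_le_one_iff₀]; right; exact hA1
  calc A⁻¹ * (C + D * ((A - 1) / K)) = A⁻¹ * C + (A⁻¹ * (A - 1)) * (D / K) := by ring
    _ ≤ 1 * C + 1 * (D / K) := by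
        apply add_le_add
        · exact mul_le_mul_of_nonneg_right hinv hC
        · exact mul_le_mul_of_nonneg_right key (by positivity)
    _ = C + D / K := by ring

end aux
section main
variable {𝕜 : Type*} [RCLike 𝕜] {n : ℕ}

/-- The weighted primitive `b ↦ ∫_0^b e^{Ks} z(s) ds`. -/
noncomputable def Fz (K : ℝ) (z : ℝ →ᵇ (Fin n → 𝕜)) (b : ℝ) : Fin n → 𝕜 :=
  ∫ s in (0:ℝ)..b, Real.exp (K * s) • z s

lemma continuous_gz (K : ℝ) (z : ℝ →ᵇ (Fin n → 𝕜)) :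
    Continuous fun s : ℝ => Real.exp (K * s) • (z s : Fin n → 𝕜) :=
  (Real.continuous_exp.comp (continuous_const.mul continuous_id)).smul z.continuous

lemma continuous_Fz (K : ℝ) (z : ℝ →ᵇ (Fin n → 𝕜)) : Continuous (Fz K z) :=
  intervalIntegral.continuous_primitive
    (fun a b => ((continuous_gz K z).intervalIntegrable a b)) 0

/-- The candidate history functional: `θ ↦ ∫_0^{max (t+θ) 0} e^{Ks} z(s) ds`. -/
noncomputable def Psi (r K : ℝ) (z : ℝ →ᵇ (Fin n → 𝕜)) (t : ℝ) :
    C(Set.Icc (-r) (0:ℝ), Fin n → 𝕜) :=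
  ⟨fun θ => Fz K z (max (t + θ) 0),
   (continuous_Fz K z).comp
     ((continuous_const.add continuous_subtype_val).max continuous_const)⟩

lemma Psi_apply (r K : ℝ) (z : ℝ →ᵇ (Fin n → 𝕜)) (t : ℝ) (θ : Set.Icc (-r) (0:ℝ)) :
    Psi r K z t θ = ∫ s in (0:ℝ)..(max (t + θ) 0), Real.exp (K * s) • z s := rfl

lemma Psi_zero (r K : ℝ) (z : ℝ →ᵇ (Fin n → 𝕜)) : Psi r K z 0 = 0 := by
  ext θ
  rw [Psi_apply, max_eq_right (by linarith [θ.2.2] : (0:ℝ) + θ ≤ 0),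
    intervalIntegral.integral_same]
  rfl

lemma norm_Psi_apply_le (r : ℝ) {K : ℝ} (hK : 0 < K) (z : ℝ →ᵇ (Fin n → 𝕜)) {t : ℝ}
    (ht : 0 ≤ t) (θ : Set.Icc (-r) (0:ℝ)) :
    ‖Psi r K z t θ‖ ≤ (Real.exp (K * t) - 1) / K * ‖z‖ := by
  rw [Psi_apply]
  set m := max (t + θ) 0 with hm
  have hm0 : (0:ℝ) ≤ m := le_max_right _ _
  have hmt : m ≤ t := max_le (by linarith [θ.2.2]) ht
  have hcont1 : Continuous fun s : ℝ => Real.exp (K * s) * ‖z s‖ :=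
    (Real.continuous_exp.comp (continuous_const.mul continuous_id)).mul z.continuous.norm
  calc ‖∫ s in (0:ℝ)..m, Real.exp (K * s) • z s‖
      ≤ ∫ s in (0:ℝ)..m, ‖Real.exp (K * s) • z s‖ :=
        intervalIntegral.norm_integral_le_integral_norm hm0
    _ = ∫ s in (0:ℝ)..m, Real.exp (K * s) * ‖z s‖ := by
        apply intervalIntegral.integral_congr
        intro s _
        simp [norm_smul, Real.abs_exp]
    _ ≤ ∫ s in (0:ℝ)..m, Real.exp (K * s) * ‖z‖ := by
        apply intervalIntegral.integral_mono_on hm0 (hcont1.intervalIntegrable _ _)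
          (by apply Continuous.intervalIntegrable; continuity)
        intro s _
        exact mul_le_mul_of_nonneg_left (z.norm_coe_le_norm s) (Real.exp_pos _).le
    _ = (∫ s in (0:ℝ)..m, Real.exp (K * s)) * ‖z‖ := by
        rw [intervalIntegral.integral_mul_const]
    _ = (Real.exp (K * m) - 1) / K * ‖z‖ := by rw [integral_exp_mul' hK]
    _ ≤ (Real.exp (K * t) - 1) / K * ‖z‖ := by
        gcongr

lemma norm_Psi_le (r : ℝ) {K : ℝ} (hK : 0 < K) (z : ℝ →ᵇ (Fin n → 𝕜)) {t : ℝ} (ht : 0 ≤ t) :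
    ‖Psi r K z t‖ ≤ (Real.exp (K * t) - 1) / K * ‖z‖ := by
  have hnn : 0 ≤ (Real.exp (K * t) - 1) / K * ‖z‖ := by
    apply mul_nonneg _ (norm_nonneg _)
    apply div_nonneg _ hK.le
    have : (1:ℝ) ≤ Real.exp (K * t) := Real.one_le_exp (by positivity)
    linarith
  exact (ContinuousMap.norm_le _ hnn).2 (norm_Psi_apply_le r hK z ht)

lemma Psi_sub (r K : ℝ) (z z' : ℝ →ᵇ (Fin n → 𝕜)) (t : ℝ) :
    Psi r K (z - z') t = Psi r K z t - Psi r K z' t := by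
  refine ContinuousMap.ext fun θ => ?_
  simp only [Psi_apply, ContinuousMap.sub_apply]
  rw [← intervalIntegral.integral_sub ((continuous_gz K z).intervalIntegrable _ _)
    ((continuous_gz K z').intervalIntegrable _ _)]
  apply intervalIntegral.integral_congr
  intro s _
  simp [smul_sub]

lemma Psi_add (r K : ℝ) (z z' : ℝ →ᵇ (Fin n → 𝕜)) (t : ℝ) :
    Psi r K (z + z') t = Psi r K z t + Psi r K z' t := by
  refine ContinuousMap.ext fun θ => ?_
  simp only [Psi_apply, ContinuousMap.add_apply]
  rw [← intervalIntegral.integral_add ((continuous_gz K z).intervalIntegrable _ _)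
    ((continuous_gz K z').intervalIntegrable _ _)]
  apply intervalIntegral.integral_congr
  intro s _
  simp [smul_add]

lemma Psi_smul (r K : ℝ) (a : 𝕜) (z : ℝ →ᵇ (Fin n → 𝕜)) (t : ℝ) :
    Psi r K (a • z) t = a • Psi r K z t := by
  refine ContinuousMap.ext fun θ => ?_
  simp only [Psi_apply, ContinuousMap.smul_apply]
  rw [← intervalIntegral.integral_smul]
  apply intervalIntegral.integral_congr
  intro s _
  simp only [BoundedContinuousFunction.coe_smul, Pi.smul_apply]
  rw [smul_comm]

variable {r : ℝ}

/-- The raw Picard map. -/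
noncomputable def phiFun (L : C(Set.Icc (-r) (0:ℝ), Fin n → 𝕜) →L[𝕜] (Fin n → 𝕜))
    (ξ : Fin n → 𝕜) (z : ℝ →ᵇ (Fin n → 𝕜)) (t : ℝ) : Fin n → 𝕜 :=
  Real.exp (-((‖L‖ + 1) * max t 0)) • (ξ + L (Psi r (‖L‖ + 1) z (max t 0)))

lemma continuous_LPsi (L : C(Set.Icc (-r) (0:ℝ), Fin n → 𝕜) →L[𝕜] (Fin n → 𝕜)) (K : ℝ)
    (z : ℝ →ᵇ (Fin n → 𝕜)) : Continuous fun t : ℝ => L (Psi r K z t) := by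
  have hP : Continuous fun p : ℝ × (Set.Icc (-r) (0:ℝ)) => Fz K z (max (p.1 + p.2) 0) :=
    (continuous_Fz K z).comp
      ((continuous_fst.add (continuous_subtype_val.comp continuous_snd)).max continuous_const)
  have h2 : ∀ t : ℝ, L (Psi r K z t) = L ((ContinuousMap.mk _ hP).curry t) := by
    intro t
    exact congrArg L (ContinuousMap.ext fun θ => rfl)
  simp only [h2]
  exact L.continuous.comp ((ContinuousMap.mk _ hP).curry.continuous)

lemma continuous_phiFun (L : C(Set.Icc (-r) (0:ℝ), Fin n → 𝕜) →L[𝕜] (Fin n → 𝕜))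
    (ξ : Fin n → 𝕜) (z : ℝ →ᵇ (Fin n → 𝕜)) : Continuous (phiFun L ξ z) := by
  apply Continuous.fun_smul
  · exact Real.continuous_exp.comp
      ((continuous_const.mul (continuous_id.max continuous_const)).neg)
  · exact continuous_const.add
      ((continuous_LPsi L _ z).comp (continuous_id.max continuous_const))

lemma norm_phiFun_le (L : C(Set.Icc (-r) (0:ℝ), Fin n → 𝕜) →L[𝕜] (Fin n → 𝕜))
    (ξ : Fin n → 𝕜) (z : ℝ →ᵇ (Fin n → 𝕜)) (t : ℝ) :
    ‖phiFun L ξ z t‖ ≤ ‖ξ‖ + ‖L‖ * ‖z‖ / (‖L‖ + 1) := by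
  have hK : (0:ℝ) < ‖L‖ + 1 := by positivity
  rw [phiFun, norm_smul, Real.norm_eq_abs, Real.abs_exp]
  have h1 : ‖ξ + L (Psi r (‖L‖+1) z (max t 0))‖ ≤
      ‖ξ‖ + (‖L‖ * ‖z‖) * ((Real.exp ((‖L‖+1) * max t 0) - 1) / (‖L‖+1)) := by
    refine (norm_add_le _ _).trans ?_
    gcongr
    refine (L.le_opNorm _).trans ?_
    have := norm_Psi_le r hK z (le_max_right t 0)
    calc ‖L‖ * ‖Psi r (‖L‖+1) z (max t 0)‖
        ≤ ‖L‖ * ((Real.exp ((‖L‖+1) * max t 0) - 1) / (‖L‖+1) * ‖z‖) := by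
          gcongr
      _ = (‖L‖ * ‖z‖) * ((Real.exp ((‖L‖+1) * max t 0) - 1) / (‖L‖+1)) := by ring
  calc Real.exp (-((‖L‖+1) * max t 0)) * ‖ξ + L (Psi r (‖L‖+1) z (max t 0))‖
      ≤ Real.exp (-((‖L‖+1) * max t 0)) *
        (‖ξ‖ + (‖L‖ * ‖z‖) * ((Real.exp ((‖L‖+1) * max t 0) - 1) / (‖L‖+1))) := by
        exact mul_le_mul_of_nonneg_left h1 (Real.exp_pos _).le
    _ ≤ ‖ξ‖ + (‖L‖ * ‖z‖) / (‖L‖ + 1) :=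
        exp_bound_aux' (by positivity) hK (norm_nonneg _)
          (by positivity)
    _ = ‖ξ‖ + ‖L‖ * ‖z‖ / (‖L‖ + 1) := by ring

/-- The Picard map as a self-map of bounded continuous functions. -/
noncomputable def Phi (L : C(Set.Icc (-r) (0:ℝ), Fin n → 𝕜) →L[𝕜] (Fin n → 𝕜))
    (ξ : Fin n → 𝕜) (z : ℝ →ᵇ (Fin n → 𝕜)) : ℝ →ᵇ (Fin n → 𝕜) :=
  BoundedContinuousFunction.ofNormedAddCommGroup (phiFun L ξ z)
    (continuous_phiFun L ξ z) _ (norm_phiFun_le L ξ z)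

lemma Phi_apply (L : C(Set.Icc (-r) (0:ℝ), Fin n → 𝕜) →L[𝕜] (Fin n → 𝕜))
    (ξ : Fin n → 𝕜) (z : ℝ →ᵇ (Fin n → 𝕜)) (t : ℝ) : Phi L ξ z t = phiFun L ξ z t := rfl

lemma dist_Phi_le (L : C(Set.Icc (-r) (0:ℝ), Fin n → 𝕜) →L[𝕜] (Fin n → 𝕜))
    (ξ : Fin n → 𝕜) (z z' : ℝ →ᵇ (Fin n → 𝕜)) :
    dist (Phi L ξ z) (Phi L ξ z') ≤ (‖L‖ / (‖L‖ + 1)) * dist z z' := by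
  have hK : (0:ℝ) < ‖L‖ + 1 := by positivity
  apply (BoundedContinuousFunction.dist_le (by positivity)).2
  intro t
  rw [dist_eq_norm, Phi_apply, Phi_apply, phiFun, phiFun, ← smul_sub,
    add_sub_add_left_eq_sub, ← map_sub, ← Psi_sub]
  rw [norm_smul, Real.norm_eq_abs, Real.abs_exp]
  have h1 : ‖L (Psi r (‖L‖+1) (z - z') (max t 0))‖ ≤
      (‖L‖ * ‖z - z'‖) * ((Real.exp ((‖L‖+1) * max t 0) - 1) / (‖L‖+1)) := by
    refine (L.le_opNorm _).trans ?_
    have := norm_Psi_le r hK (z - z') (le_max_right t 0)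
    calc ‖L‖ * ‖Psi r (‖L‖+1) (z - z') (max t 0)‖
        ≤ ‖L‖ * ((Real.exp ((‖L‖+1) * max t 0) - 1) / (‖L‖+1) * ‖z - z'‖) := by gcongr
      _ = (‖L‖ * ‖z - z'‖) * ((Real.exp ((‖L‖+1) * max t 0) - 1) / (‖L‖+1)) := by ring
  calc Real.exp (-((‖L‖+1) * max t 0)) * ‖L (Psi r (‖L‖+1) (z - z') (max t 0))‖
      ≤ Real.exp (-((‖L‖+1) * max t 0)) *
        (0 + (‖L‖ * ‖z - z'‖) * ((Real.exp ((‖L‖+1) * max t 0) - 1) / (‖L‖+1))) := by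
        rw [zero_add]
        exact mul_le_mul_of_nonneg_left h1 (Real.exp_pos _).le
    _ ≤ 0 + (‖L‖ * ‖z - z'‖) / (‖L‖ + 1) :=
        exp_bound_aux' (by positivity) hK le_rfl (by positivity)
    _ = (‖L‖ / (‖L‖ + 1)) * ‖z - z'‖ := by ring
    _ = (‖L‖ / (‖L‖ + 1)) * dist z z' := by rw [dist_eq_norm]

lemma phi_contracting (L : C(Set.Icc (-r) (0:ℝ), Fin n → 𝕜) →L[𝕜] (Fin n → 𝕜))
    (ξ : Fin n → 𝕜) :
    ContractingWith ⟨‖L‖ / (‖L‖ + 1), by positivity⟩ (Phi L ξ) := by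
  constructor
  · apply NNReal.coe_lt_coe.1
    show ‖L‖ / (‖L‖ + 1) < 1
    rw [div_lt_one (by positivity)]
    linarith [norm_nonneg L]
  · apply LipschitzWith.of_dist_le_mul
    intro z z'
    exact dist_Phi_le L ξ z z'

/-- The fixed point of the Picard map. -/
noncomputable def zfix (L : C(Set.Icc (-r) (0:ℝ), Fin n → 𝕜) →L[𝕜] (Fin n → 𝕜))
    (ξ : Fin n → 𝕜) : ℝ →ᵇ (Fin n → 𝕜) :=
  ContractingWith.fixedPoint (Phi L ξ) (phi_contracting L ξ)

lemma zfix_fixed (L : C(Set.Icc (-r) (0:ℝ), Fin n → 𝕜) →L[𝕜] (Fin n → 𝕜))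
    (ξ : Fin n → 𝕜) : Phi L ξ (zfix L ξ) = zfix L ξ :=
  ContractingWith.fixedPoint_isFixedPt (phi_contracting L ξ)

lemma zfix_apply (L : C(Set.Icc (-r) (0:ℝ), Fin n → 𝕜) →L[𝕜] (Fin n → 𝕜))
    (ξ : Fin n → 𝕜) (t : ℝ) :
    zfix L ξ t = Real.exp (-((‖L‖ + 1) * max t 0)) •
      (ξ + L (Psi r (‖L‖ + 1) (zfix L ξ) (max t 0))) :=
  (DFunLike.congr_fun (zfix_fixed L ξ) t).symm

/-- The mild solution. -/
noncomputable def xsol (L : C(Set.Icc (-r) (0:ℝ), Fin n → 𝕜) →L[𝕜] (Fin n → 𝕜))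
    (ξ : Fin n → 𝕜) (t : ℝ) : Fin n → 𝕜 :=
  if t < 0 then 0 else Real.exp ((‖L‖ + 1) * t) • zfix L ξ t

lemma xsol_of_nonneg (L : C(Set.Icc (-r) (0:ℝ), Fin n → 𝕜) →L[𝕜] (Fin n → 𝕜))
    (ξ : Fin n → 𝕜) {t : ℝ} (ht : 0 ≤ t) :
    xsol L ξ t = ξ + L (Psi r (‖L‖ + 1) (zfix L ξ) t) := by
  rw [xsol, if_neg (not_lt.2 ht), zfix_apply, max_eq_left ht, smul_smul, ← Real.exp_add,
    add_neg_cancel, Real.exp_zero, one_smul]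

end main

section main2
variable {𝕜 : Type*} [RCLike 𝕜] {n : ℕ} {r : ℝ}

lemma Psi_eq (K : ℝ) (z : ℝ →ᵇ (Fin n → 𝕜)) (x : ℝ → Fin n → 𝕜)
    (hxz : ∀ s, 0 ≤ s → x s = Real.exp (K * s) • z s)
    (hx0 : ∀ s, -r ≤ s → s < 0 → x s = 0)
    (hxc : ContinuousOn x (Set.Ici 0)) {t : ℝ} (ht : 0 ≤ t) (θ : Set.Icc (-r) (0:ℝ)) :
    Psi r K z t θ = ∫ s in (θ:ℝ)..(t + θ), x s := by
  have hθ0 : (θ:ℝ) ≤ 0 := θ.2.2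
  rw [integral_split' hθ0 ht (fun s hs hs' => hx0 s (θ.2.1.trans hs) hs') hxc, Psi_apply]
  apply intervalIntegral.integral_congr
  intro s hs
  rw [Set.uIcc_of_le (le_max_right _ _)] at hs
  exact (hxz s hs.1).symm

lemma isMildSol_xsol (L : C(Set.Icc (-r) (0:ℝ), Fin n → 𝕜) →L[𝕜] (Fin n → 𝕜))
    (ξ : Fin n → 𝕜) : IsMildSol r L (fun _ => 0) ξ (xsol L ξ) := by
  have hxz : ∀ s : ℝ, 0 ≤ s → xsol L ξ s = Real.exp ((‖L‖ + 1) * s) • zfix L ξ s :=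
    fun s hs => by rw [xsol, if_neg (not_lt.2 hs)]
  have hx0 : ∀ s : ℝ, s < 0 → xsol L ξ s = 0 := fun s hs => by rw [xsol, if_pos hs]
  have hxc : ContinuousOn (xsol L ξ) (Set.Ici 0) := by
    apply ContinuousOn.congr (f := fun s => Real.exp ((‖L‖ + 1) * s) • zfix L ξ s)
    · exact ((Real.continuous_exp.comp (continuous_const.mul continuous_id)).smul
        (zfix L ξ).continuous).continuousOn
    · exact fun s hs => hxz s hs
  refine ⟨fun θ hθ => hx0 θ hθ.2, ?_, hxc, ?_⟩
  · rw [xsol_of_nonneg L ξ le_rfl, Psi_zero, map_zero, add_zero]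
  · intro t ht
    refine ⟨Psi r (‖L‖ + 1) (zfix L ξ) t, ?_, xsol_of_nonneg L ξ ht⟩
    intro θ
    exact Psi_eq (‖L‖ + 1) (zfix L ξ) (xsol L ξ) hxz (fun s _ hs => hx0 s hs) hxc ht θ

lemma mild_norm_le (L : C(Set.Icc (-r) (0:ℝ), Fin n → 𝕜) →L[𝕜] (Fin n → 𝕜))
    {ξ : Fin n → 𝕜} {x : ℝ → Fin n → 𝕜}
    (hx : IsMildSol r L (fun _ => 0) ξ x) {t : ℝ} (ht : 0 ≤ t) :
    ‖x t‖ ≤ ‖ξ‖ * Real.exp ((‖L‖ + 1) * t) := by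
  obtain ⟨h0, hx0, hcont, hsol⟩ := hx
  set K : ℝ := ‖L‖ + 1 with hKdef
  have hK : 0 < K := by positivity
  set g : ℝ → ℝ := fun s => ‖x (max s 0)‖ with hg
  have hgc : Continuous g := continuous_norm.comp
    (hcont.comp_continuous (continuous_id.max continuous_const) fun s => Set.mem_Ici.2 (le_max_right _ _))
  set u : ℝ → ℝ := fun b => ∫ s in (0:ℝ)..b, g s with hu
  have hunn : ∀ τ : ℝ, 0 ≤ τ → 0 ≤ u τ :=
    fun τ hτ => intervalIntegral.integral_nonneg hτ (fun s _ => norm_nonneg _)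
  have key : ∀ τ : ℝ, 0 ≤ τ → ‖x τ‖ ≤ K * u τ + ‖ξ‖ := by
    intro τ hτ
    obtain ⟨ψ, hψ1, hψ2⟩ := hsol τ hτ
    have hψn : ‖ψ‖ ≤ u τ := by
      apply (ContinuousMap.norm_le _ (hunn τ hτ)).2
      intro θ
      rw [hψ1 θ]
      have hθ0 : (θ:ℝ) ≤ 0 := θ.2.2
      rw [integral_split' hθ0 hτ
        (fun s hs hs' => h0 s ⟨θ.2.1.trans hs, hs'⟩) hcont]
      set m := max (τ + θ) 0 with hm
      have hm0 : (0:ℝ) ≤ m := le_max_right _ _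
      have hmτ : m ≤ τ := max_le (by linarith [hθ0]) hτ
      calc ‖∫ s in (0:ℝ)..m, x s‖ ≤ ∫ s in (0:ℝ)..m, ‖x s‖ :=
            intervalIntegral.norm_integral_le_integral_norm hm0
        _ = ∫ s in (0:ℝ)..m, g s := by
            apply intervalIntegral.integral_congr
            intro s hs
            rw [Set.uIcc_of_le hm0] at hs
            simp [hg, max_eq_left hs.1]
        _ ≤ u τ := by
            apply intervalIntegral.integral_mono_interval le_rfl hm0 hmτ
              (ae_of_all _ fun s => norm_nonneg _) (hgc.intervalIntegrable 0 τ)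
    rw [hψ2]
    have h1 : ‖L ψ‖ ≤ K * u τ := by
      calc ‖L ψ‖ ≤ ‖L‖ * ‖ψ‖ := L.le_opNorm ψ
        _ ≤ K * u τ := by
            apply mul_le_mul (by linarith) hψn (norm_nonneg _) hK.le
    calc ‖ξ + L ψ‖ ≤ ‖ξ‖ + ‖L ψ‖ := norm_add_le _ _
      _ ≤ K * u τ + ‖ξ‖ := by linarith
  have hucont : Continuous u :=
    intervalIntegral.continuous_primitive (fun a b => hgc.intervalIntegrable a b) 0
  have hgron := norm_le_gronwallBound_of_norm_deriv_right_le (f := u) (f' := g)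
    (δ := 0) (K := K) (ε := ‖ξ‖) (a := 0) (b := t)
    hucont.continuousOn
    (fun τ _ => ((hgc.integral_hasStrictDerivAt 0 τ).hasDerivAt).hasDerivWithinAt)
    (by simp [hu])
    (fun τ hτ => by
      have hkey := key τ hτ.1
      have hgτ : g τ = ‖x τ‖ := by simp [hg, max_eq_left hτ.1]
      rw [Real.norm_eq_abs, Real.norm_eq_abs, abs_of_nonneg (hunn τ hτ.1),
        abs_of_nonneg (hgτ ▸ norm_nonneg (x τ)), hgτ]
      exact hkey)
  have hut : u t ≤ ‖ξ‖ / K * (Real.exp (K * t) - 1) := by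
    have := hgron t ⟨ht, le_rfl⟩
    rw [Real.norm_eq_abs, abs_of_nonneg (hunn t ht)] at this
    rw [gronwallBound_of_K_ne_0 hK.ne'] at this
    simpa using this
  have hfin := key t ht
  have heq : K * (‖ξ‖ / K * (Real.exp (K * t) - 1)) + ‖ξ‖ = ‖ξ‖ * Real.exp (K * t) := by
    field_simp
    ring
  have hmul : K * u t ≤ K * (‖ξ‖ / K * (Real.exp (K * t) - 1)) :=
    mul_le_mul_of_nonneg_left hut hK.le
  exact hfin.trans (by rw [← heq]; exact add_le_add_left hmul _)

lemma eq_xsol (L : C(Set.Icc (-r) (0:ℝ), Fin n → 𝕜) →L[𝕜] (Fin n → 𝕜))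
    {ξ : Fin n → 𝕜} {x : ℝ → Fin n → 𝕜}
    (hx : IsMildSol r L (fun _ => 0) ξ x) :
    ∀ s, -r ≤ s → x s = xsol L ξ s := by
  set K : ℝ := ‖L‖ + 1 with hKdef
  have hK : 0 < K := by positivity
  have hcont : ContinuousOn x (Set.Ici 0) := hx.2.2.1
  have hcontz : Continuous fun t : ℝ => Real.exp (-(K * max t 0)) • x (max t 0) :=
    (Real.continuous_exp.comp
      ((continuous_const.mul (continuous_id.max continuous_const)).neg)).smul
      (hcont.comp_continuous (continuous_id.max continuous_const) fun t => Set.mem_Ici.2 (le_max_right _ _))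
  have hbd : ∀ t : ℝ, ‖Real.exp (-(K * max t 0)) • x (max t 0)‖ ≤ ‖ξ‖ := by
    intro t
    rw [norm_smul, Real.norm_eq_abs, Real.abs_exp]
    have h1 := mild_norm_le L hx (le_max_right t 0)
    calc Real.exp (-(K * max t 0)) * ‖x (max t 0)‖
        ≤ Real.exp (-(K * max t 0)) * (‖ξ‖ * Real.exp (K * max t 0)) :=
          mul_le_mul_of_nonneg_left h1 (Real.exp_pos _).le
      _ = ‖ξ‖ := by
          rw [mul_comm ‖ξ‖, ← mul_assoc, ← Real.exp_add, neg_add_cancel, Real.exp_zero,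
            one_mul]
  set z : ℝ →ᵇ (Fin n → 𝕜) :=
    BoundedContinuousFunction.ofNormedAddCommGroup _ hcontz ‖ξ‖ hbd with hzz
  have hz_apply : ∀ t : ℝ, z t = Real.exp (-(K * max t 0)) • x (max t 0) := fun t => rfl
  have hzx : ∀ s : ℝ, 0 ≤ s → x s = Real.exp (K * s) • z s := by
    intro s hs
    rw [hz_apply, max_eq_left hs, smul_smul, ← Real.exp_add, add_neg_cancel, Real.exp_zero,
      one_smul]
  have hfix : Phi L ξ z = z := by
    apply DFunLike.ext
    intro t
    obtain ⟨ψ, hψ1, hψ2⟩ := hx.2.2.2 (max t 0) (le_max_right _ _)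
    have hPsiψ : Psi r K z (max t 0) = ψ := by
      refine ContinuousMap.ext fun θ => ?_
      rw [Psi_eq K z x hzx (fun s hs hs' => hx.1 s ⟨hs, hs'⟩) hcont (le_max_right _ _) θ,
        hψ1]
    rw [Phi_apply, phiFun, ← hKdef, hPsiψ, ← hψ2, hz_apply]
  have hzeq : z = zfix L ξ :=
    ContractingWith.fixedPoint_unique (phi_contracting L ξ) hfix
  intro s hs
  rcases lt_or_ge s 0 with h | h
  · rw [xsol, if_pos h]
    exact hx.1 s ⟨hs, h⟩
  · rw [hzx s h, hzeq, xsol, if_neg (not_lt.2 h), hKdef]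

end main2
section main3
variable {𝕜 : Type*} [RCLike 𝕜] {n : ℕ} {r : ℝ}

lemma zfix_add (L : C(Set.Icc (-r) (0:ℝ), Fin n → 𝕜) →L[𝕜] (Fin n → 𝕜)) (ξ ξ' : Fin n → 𝕜) :
    zfix L (ξ + ξ') = zfix L ξ + zfix L ξ' := by
  refine (ContractingWith.fixedPoint_unique (phi_contracting L (ξ + ξ')) ?_).symm
  show Phi L (ξ + ξ') (zfix L ξ + zfix L ξ') = _
  apply DFunLike.ext
  intro t
  have hrhs : (zfix L ξ + zfix L ξ') t = zfix L ξ t + zfix L ξ' t := rfl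
  rw [hrhs]
  conv_rhs => rw [← zfix_fixed L ξ, ← zfix_fixed L ξ']
  rw [Phi_apply, Phi_apply, Phi_apply, phiFun, phiFun, phiFun, Psi_add, map_add, ← smul_add]
  congr 1
  abel

lemma zfix_smul (L : C(Set.Icc (-r) (0:ℝ), Fin n → 𝕜) →L[𝕜] (Fin n → 𝕜)) (a : 𝕜)
    (ξ : Fin n → 𝕜) : zfix L (a • ξ) = a • zfix L ξ := by
  refine (ContractingWith.fixedPoint_unique (phi_contracting L (a • ξ)) ?_).symm
  show Phi L (a • ξ) (a • zfix L ξ) = _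
  apply DFunLike.ext
  intro t
  have hrhs : (a • zfix L ξ) t = a • zfix L ξ t := rfl
  rw [hrhs]
  conv_rhs => rw [← zfix_fixed L ξ]
  rw [Phi_apply, Phi_apply, phiFun, phiFun, Psi_smul, _root_.map_smul, ← smul_add, smul_comm]

lemma xsol_add (L : C(Set.Icc (-r) (0:ℝ), Fin n → 𝕜) →L[𝕜] (Fin n → 𝕜)) (ξ ξ' : Fin n → 𝕜)
    (t : ℝ) : xsol L (ξ + ξ') t = xsol L ξ t + xsol L ξ' t := by
  rcases lt_or_ge t 0 with h | h
  · simp [xsol, h]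
  · simp only [xsol, if_neg (not_lt.2 h), zfix_add]
    have : (zfix L ξ + zfix L ξ') t = zfix L ξ t + zfix L ξ' t := rfl
    rw [this, smul_add]

lemma xsol_smul (L : C(Set.Icc (-r) (0:ℝ), Fin n → 𝕜) →L[𝕜] (Fin n → 𝕜)) (a : 𝕜)
    (ξ : Fin n → 𝕜) (t : ℝ) : xsol L (a • ξ) t = a • xsol L ξ t := by
  rcases lt_or_ge t 0 with h | h
  · simp [xsol, h]
  · simp only [xsol, if_neg (not_lt.2 h), zfix_smul]
    have : (a • zfix L ξ) t = a • zfix L ξ t := rfl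
    rw [this, smul_comm]

/-- The linear solution map `ξ ↦ xsol L ξ` restricted to `[-r, ∞)`. -/
noncomputable def solMap (L : C(Set.Icc (-r) (0:ℝ), Fin n → 𝕜) →L[𝕜] (Fin n → 𝕜)) :
    (Fin n → 𝕜) →ₗ[𝕜] (Set.Ici (-r) → Fin n → 𝕜) where
  toFun ξ := (Set.Ici (-r)).restrict (xsol L ξ)
  map_add' ξ ξ' := funext fun s => xsol_add L ξ ξ' s
  map_smul' a ξ := funext fun s => xsol_smul L a ξ s

lemma xsol_zero_val (L : C(Set.Icc (-r) (0:ℝ), Fin n → 𝕜) →L[𝕜] (Fin n → 𝕜))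
    (ξ : Fin n → 𝕜) : xsol L ξ 0 = ξ :=
  (isMildSol_xsol L ξ).2.1

end main3

/-- The set of all mild solutions with instantaneous-input initial data `(0, ξ)`,
viewed as functions on `[-r,∞)`, is an `n`-dimensional linear subspace of the space of
functions from `[-r,∞)` to `𝕂ⁿ`. -/
theorem stmt_3 {𝕜 : Type*} [RCLike 𝕜] {n : ℕ} (hn : 0 < n) {r : ℝ} (hr : 0 < r)
    (L : C(Set.Icc (-r) (0:ℝ), Fin n → 𝕜) →L[𝕜] (Fin n → 𝕜)) :
    ∃ p : Submodule 𝕜 (Set.Ici (-r) → Fin n → 𝕜),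
      (p : Set (Set.Ici (-r) → Fin n → 𝕜)) =
        {f | ∃ (ξ : Fin n → 𝕜) (x : ℝ → Fin n → 𝕜),
          IsMildSol r L (fun _ => 0) ξ x ∧ f = (Set.Ici (-r)).restrict x} ∧
      Module.finrank 𝕜 p = n := by
  refine ⟨LinearMap.range (solMap L), ?_, ?_⟩
  · ext f
    simp only [SetLike.mem_coe, LinearMap.mem_range, Set.mem_setOf_eq]
    constructor
    · rintro ⟨ξ, rfl⟩
      exact ⟨ξ, xsol L ξ, isMildSol_xsol L ξ, rfl⟩
    · rintro ⟨ξ, x, hx, rfl⟩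
      refine ⟨ξ, funext fun s => ?_⟩
      exact (eq_xsol L hx s s.2).symm
  · have hinj : Function.Injective (solMap L (r := r)) := by
      intro ξ ξ' h
      have h0 : (0:ℝ) ∈ Set.Ici (-r) := by simp; linarith
      have := congrFun h (⟨0, h0⟩ : Set.Ici (-r))
      exact (xsol_zero_val L ξ).symm.trans (this.trans (xsol_zero_val L ξ'))
    rw [LinearMap.finrank_range_of_inj hinj, Module.finrank_fin_fun]
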